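/- arXiv:2402.04985 — 2 statements merged into one kernel-verified Lean document; each statement's English description precedes it below -/
import Mathlib

section
/- For every real number n > 0 and every real number x, it holds that 0 ≤ |x| − x · (2/π) · arctan(n·x) ≤ 2/(π·n). In particular, the smooth surrogate x·(2/π)·arctan(n·x) approximates the absolute value function with uniform error at most 2/(π·n). -/
open Real

lemma arctan_lt_self_of_pos {t : ℝ} (ht : 0 < t) : arctan t < t := by
  have h1 : 0 < arctan t := by rw [← arctan_zero]; exact arctan_strictMono ht
  have h2 : arctan t < π / 2 := arctan_lt_pi_div_two t
  have := Real.lt_tan h1 h2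
  rwa [tan_arctan] at this

lemma aux_nonneg_case (n : ℝ) (hn : 0 < n) (x : ℝ) (hx : 0 ≤ x) :
    0 ≤ |x| - x * (2 / π) * arctan (n * x) ∧
    |x| - x * (2 / π) * arctan (n * x) ≤ 2 / (π * n) := by
  have hπ : 0 < π := pi_pos
  rw [abs_of_nonneg hx]
  constructor
  · have h1 : arctan (n * x) ≤ π / 2 := (arctan_lt_pi_div_two _).le
    have h2 : x * (2 / π) * arctan (n * x) ≤ x * (2 / π) * (π / 2) := by
      apply mul_le_mul_of_nonneg_left h1
      positivity
    have : x * (2 / π) * (π / 2) = x := by field_simp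
    nlinarith
  · rcases eq_or_lt_of_le hx with h | h
    · rw [← h]
      simp
      positivity
    · have hnx : 0 < n * x := by positivity
      have key : arctan (n * x)⁻¹ = π / 2 - arctan (n * x) := arctan_inv_of_pos hnx
      have hle : arctan (n * x)⁻¹ ≤ (n * x)⁻¹ :=
        (arctan_lt_self_of_pos (by positivity)).le
      have : x - x * (2 / π) * arctan (n * x) = x * (2 / π) * arctan (n * x)⁻¹ := by
        rw [key]; field_simp
      rw [this]
      have h3 : x * (2 / π) * arctan (n * x)⁻¹ ≤ x * (2 / π) * (n * x)⁻¹ := by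
        apply mul_le_mul_of_nonneg_left hle
        positivity
      have h4 : x * (2 / π) * (n * x)⁻¹ = 2 / (π * n) := by
        field_simp
      linarith

theorem abs_smoothing_error_bound (n : ℝ) (hn : 0 < n) (x : ℝ) :
    0 ≤ |x| - x * (2 / π) * arctan (n * x) ∧
    |x| - x * (2 / π) * arctan (n * x) ≤ 2 / (π * n) := by
  rcases le_or_gt 0 x with hx | hx
  · exact aux_nonneg_case n hn x hx
  · have := aux_nonneg_case n hn (-x) (by linarith)
    have heq : |(-x)| - (-x) * (2 / π) * arctan (n * (-x)) =
        |x| - x * (2 / π) * arctan (n * x) := by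
      rw [abs_neg, mul_neg, arctan_neg]
      ring
    rwa [heq] at this
end

section
/- Fix real constants g, k_{d1}, k_{d2}, k_{d3}, k_L, c, n, and let h(p) = (2/π)·arctan(n·p), s(p) = p·h(p), q(p) = p²·h(p). Define the smoothed hovering vector field Z : ℝ⁴ → ℝ⁴ on states (z, φ, w, p) by Z(z, φ, w, p) = ( w, p, g − k_{d1}·s(p)·w − k_L·p², −k_{d2}·q(p) − k_{d3}·w·p + c ), and let Y be the constant vector field Y(x) = (0, 0, 0, 1). Then for every (z, φ, w, p) ∈ ℝ⁴, the iterated Lie bracket equals [Y, [Y, Z]](z, φ, w, p) = ( 0, 0, −k_{d1}·w·s''(p) − 2·k_L, −k_{d2}·q''(p) ), where s'' and q'' denote second derivatives. -/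
/-!
Because `Y` is the constant field `∂/∂p`, the bracket `[Y, W]` of `Y` with any differentiable
field `W` is the partial derivative `∂W/∂p`. For a `C²` field `Z` this applies twice, so
`[Y, [Y, Z]] = ∂²Z/∂p²`, which for the smoothed hovering field is computed componentwise.
-/

open Real

/-- Lie bracket of two vector fields on a normed space:
`[V, W](x) = DW(x)·V(x) − DV(x)·W(x)`. -/
noncomputable def lieBracketVF {E : Type*} [NormedAddCommGroup E] [NormedSpace ℝ E]
    (V W : E → E) (x : E) : E :=
  fderiv ℝ W x (V x) - fderiv ℝ V x (W x)

theorem lieBracketVF_const_left {E : Type*} [NormedAddCommGroup E] [NormedSpace ℝ E]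
    (v : E) (W : E → E) (x : E) :
    lieBracketVF (fun _ => v) W x = fderiv ℝ W x v := by
  simp [lieBracketVF]

theorem deriv_prodMk {E F : Type*} [NormedAddCommGroup E] [NormedSpace ℝ E]
    [NormedAddCommGroup F] [NormedSpace ℝ F] {f : ℝ → E} {g : ℝ → F} {x : ℝ}
    (hf : DifferentiableAt ℝ f x) (hg : DifferentiableAt ℝ g x) :
    deriv (fun t => (f t, g t)) x = (deriv f x, deriv g x) :=
  (hf.hasDerivAt.prodMk hg.hasDerivAt).deriv

theorem fderiv_apply_e4_eq_deriv {F : Type*} [NormedAddCommGroup F] [NormedSpace ℝ F]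
    {G : ℝ × ℝ × ℝ × ℝ → F} {a b u p : ℝ} (hG : DifferentiableAt ℝ G (a, b, u, p)) :
    fderiv ℝ G (a, b, u, p) ((0 : ℝ), (0 : ℝ), (0 : ℝ), (1 : ℝ)) =
      deriv (fun t => G (a, b, u, t)) p := by
  have hline : HasDerivAt (fun t : ℝ => (a, b, u, t)) ((0 : ℝ), (0 : ℝ), (0 : ℝ), (1 : ℝ)) p :=
    (hasDerivAt_const p a).prodMk
      ((hasDerivAt_const p b).prodMk ((hasDerivAt_const p u).prodMk (hasDerivAt_id p)))
  exact (hG.hasFDerivAt.comp_hasDerivAt p hline).deriv.symm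

theorem lieBracketVF_e4_lieBracketVF_e4 {Z : ℝ × ℝ × ℝ × ℝ → ℝ × ℝ × ℝ × ℝ}
    (hZ : ContDiff ℝ 2 Z) (a b u p : ℝ) :
    lieBracketVF (fun _ => ((0 : ℝ), (0 : ℝ), (0 : ℝ), (1 : ℝ)))
        (lieBracketVF (fun _ => ((0 : ℝ), (0 : ℝ), (0 : ℝ), (1 : ℝ))) Z) (a, b, u, p) =
      deriv (deriv fun t => Z (a, b, u, t)) p := by
  set e₄ : ℝ × ℝ × ℝ × ℝ := ((0 : ℝ), (0 : ℝ), (0 : ℝ), (1 : ℝ))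
  have hfirst : lieBracketVF (fun _ => e₄) Z = fun x => fderiv ℝ Z x e₄ :=
    funext (lieBracketVF_const_left e₄ Z)
  have hfirst_C1 : ContDiff ℝ 1 fun x => fderiv ℝ Z x e₄ :=
    (hZ.fderiv_right le_rfl).clm_apply contDiff_const
  rw [lieBracketVF_const_left, hfirst,
    fderiv_apply_e4_eq_deriv (hfirst_C1.differentiable one_ne_zero _)]
  congr 1
  funext t
  exact fderiv_apply_e4_eq_deriv (hZ.differentiable two_ne_zero _)

theorem iterated_bracket_smoothed_hovering_field
    (g kd1 kd2 kd3 kL c n : ℝ)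
    (h s q : ℝ → ℝ)
    (hh : ∀ p, h p = (2 / π) * arctan (n * p))
    (hs : ∀ p, s p = p * h p)
    (hq : ∀ p, q p = p ^ 2 * h p)
    (Z Y : ℝ × ℝ × ℝ × ℝ → ℝ × ℝ × ℝ × ℝ)
    (hZ : ∀ zz φ w p : ℝ, Z (zz, φ, w, p) =
      (w, p, g - kd1 * s p * w - kL * p ^ 2, -kd2 * q p - kd3 * w * p + c))
    (hY : ∀ x, Y x = ((0:ℝ), (0:ℝ), (0:ℝ), (1:ℝ))) :
    ∀ zz φ w p : ℝ,
      lieBracketVF Y (lieBracketVF Y Z) (zz, φ, w, p) =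
        ((0:ℝ), (0:ℝ), -kd1 * w * deriv (deriv s) p - 2 * kL,
          -kd2 * deriv (deriv q) p) := by
  intro zz φ w p
  have hh2 : ContDiff ℝ 2 h := by
    rw [funext hh]
    have := contDiff_arctan (n := 2)
    fun_prop
  have hs2 : ContDiff ℝ 2 s := by rw [funext hs]; fun_prop
  have hq2 : ContDiff ℝ 2 q := by rw [funext hq]; fun_prop
  have hZ2 : ContDiff ℝ 2 Z := by
    have hZe : Z = fun x => (x.2.2.1, x.2.2.2, g - kd1 * s x.2.2.2 * x.2.2.1 - kL * x.2.2.2 ^ 2,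
        -kd2 * q x.2.2.2 - kd3 * x.2.2.1 * x.2.2.2 + c) := by
      funext ⟨a, b, u, t⟩
      exact hZ a b u t
    rw [hZe]
    fun_prop
  have hds := hs2.differentiable two_ne_zero
  have hdq := hq2.differentiable two_ne_zero
  have hds' := hs2.differentiable_deriv_two
  have hdq' := hq2.differentiable_deriv_two
  have hpartial : deriv (fun t => Z (zz, φ, w, t)) = fun t =>
      ((0 : ℝ), (1 : ℝ), -kd1 * w * deriv s t - 2 * kL * t, -kd2 * deriv q t - kd3 * w) := by
    funext t
    simp (disch := fun_prop) only [hZ, neg_mul, deriv_prodMk, deriv_const', deriv_id'',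
      deriv_fun_sub, deriv_fun_mul, zero_mul, zero_add, mul_zero, add_zero, zero_sub, deriv_fun_pow,
      Nat.cast_ofNat, Nat.add_one_sub_one, pow_one, mul_one, deriv_fun_add, deriv.fun_neg',
      deriv_const_mul_id', Prod.mk.injEq, and_true, true_and]
    ring
  rw [funext hY, lieBracketVF_e4_lieBracketVF_e4 hZ2, hpartial]
  simp (disch := fun_prop) [deriv_prodMk]
end
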